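/- arXiv:1402.4659 — 4 statements merged into one kernel-verified Lean document; each statement's English description precedes it below -/
import Mathlib

section
/- Let S ⊆ ω₁, let h and p be Baumgartner conditions (elements of P_S^B), let β = max(dom p), and suppose β ∈ dom h and that p extends the restriction of h to β+1, i.e. for every γ ∈ dom h with γ ≤ β one has γ ∈ dom p and p(γ) = h(γ). Then the union h ∪ p is again an element of P_S^B. (This is the combinatorial core of the lemma that each f ∈ P_S^B forces that the generic filter intersected with (P_S^B)_f = {g ∈ P_S^B : g ≤ f and max(dom g) = max(dom f)} is generic for (P_S^B)_f.) -/
/-!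
Take witnesses `gp : αp → S` for `p` and `gh : αh → S` for `h`. Both agree with `h` at
`β = max (dom p)`, so the function that follows `gp` up to `β` and `gh` afterwards is again
strictly increasing, and it is continuous: at limits `≤ β` it is `gp`, and at limits `> β` its
supremum below the limit only depends on its values from `β` on, where it coincides with `gh`.
This glued function witnesses `h ∪ p`, because every point of `dom h` outside `dom p` lies
above `β`.
-/

/-- The first uncountable ordinal ω₁. -/
noncomputable def omegaOne : Ordinal := (Cardinal.aleph 1).ord

/-- `g` is a strictly increasing continuous function from (the ordinals below) `α` into `S`. -/
def IsBaumWitness (S : Set Ordinal) (α : Ordinal) (g : Ordinal → Ordinal) : Prop :=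
  (∀ β < α, g β ∈ S) ∧ StrictMonoOn g (Set.Iio α) ∧
    ∀ l < α, Order.IsSuccLimit l → g l = sSup (g '' Set.Iio l)

/-- The finite partial function with domain `D` and values `f` is a Baumgartner condition
in `P_S^B`: it is a finite partial function from ω₁ to `S`, and there are an ordinal `α`
greater than every element of `D` (i.e. `α > max (dom f)`) and a strictly increasing
continuous `g : α → S` agreeing with `f` on `D`. -/
def InPB (S : Set Ordinal) (D : Finset Ordinal) (f : Ordinal → Ordinal) : Prop :=
  (∀ β ∈ D, β < omegaOne ∧ f β ∈ S) ∧
    ∃ α, (∀ β ∈ D, β < α) ∧ ∃ g : Ordinal → Ordinal,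
      IsBaumWitness S α g ∧ ∀ β ∈ D, g β = f β

open Set

theorem StrictMonoOn.ite_le {α δ : Type*} [LinearOrder α] [Preorder δ] {f g : α → δ}
    {s : Set α} {b : α} (hf : StrictMonoOn f (Iic b)) (hg : StrictMonoOn g s) (hb : b ∈ s)
    (hfg : f b = g b) : StrictMonoOn (fun x => if x ≤ b then f x else g x) s := by
  intro x hx y hy hxy
  by_cases hyb : y ≤ b
  · simpa [hxy.le.trans hyb, hyb] using hf (hxy.le.trans hyb : x ≤ b) hyb hxy
  by_cases hxb : x ≤ b
  · simp only [hxb, hyb, if_true, if_false]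
    calc f x ≤ f b := hf.monotoneOn hxb le_rfl hxb
      _ = g b := hfg
      _ < g y := hg hb hy (not_le.1 hyb)
  · simpa [hxb, hyb] using hg hx hy hxy

theorem MonotoneOn.csSup_image_Iio_eq_Ico {α δ : Type*} [LinearOrder α]
    [ConditionallyCompleteLinearOrder δ] {f : α → δ} {b l : α} (hf : MonotoneOn f (Iio l))
    (hbl : b < l) : sSup (f '' Iio l) = sSup (f '' Ico b l) := by
  refine csSup_eq_csSup_of_forall_exists_le ?_ ?_
  · rintro _ ⟨x, hx, rfl⟩
    have hmax : max x b ∈ Ico b l := ⟨le_max_right x b, max_lt hx hbl⟩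
    exact ⟨f (max x b), mem_image_of_mem f hmax, hf hx hmax.2 (le_max_left x b)⟩
  · rintro _ ⟨x, hx, rfl⟩
    exact ⟨f x, mem_image_of_mem f hx.2, le_rfl⟩

theorem IsBaumWitness.ite_le {S : Set Ordinal} {αp αh β : Ordinal} {gp gh : Ordinal → Ordinal}
    (hp : IsBaumWitness S αp gp) (hh : IsBaumWitness S αh gh) (hβp : β < αp) (hβh : β < αh)
    (heq : gp β = gh β) : IsBaumWitness S αh (fun γ => if γ ≤ β then gp γ else gh γ) := by
  obtain ⟨gpS, gpMono, gpCont⟩ := hp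
  obtain ⟨ghS, ghMono, ghCont⟩ := hh
  have gpMonoIic : StrictMonoOn gp (Iic β) :=
    gpMono.mono fun γ hγ => lt_of_le_of_lt hγ hβp
  have gMono := gpMonoIic.ite_le ghMono hβh heq
  refine ⟨fun γ hγ => ?_, gMono, fun l hl hlim => ?_⟩
  · dsimp only
    split_ifs with hγβ
    exacts [gpS γ (lt_of_le_of_lt hγβ hβp), ghS γ hγ]
  by_cases hlβ : l ≤ β
  · have himage : (fun γ => if γ ≤ β then gp γ else gh γ) '' Iio l = gp '' Iio l :=
      image_congr fun γ hγ => if_pos ((mem_Iio.1 hγ).le.trans hlβ)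
    simpa [hlβ, himage] using gpCont l (lt_of_le_of_lt hlβ hβp) hlim
  · have hβl : β < l := not_le.1 hlβ
    have hagree : EqOn (fun γ => if γ ≤ β then gp γ else gh γ) gh (Ico β l) := by
      intro γ hγ
      rcases hγ.1.eq_or_lt with rfl | hβγ
      · simpa using heq
      · simp [not_le.2 hβγ]
    have hIio : Iio l ⊆ Iio αh := Iio_subset_Iio hl.le
    rw [(gMono.monotoneOn.mono hIio).csSup_image_Iio_eq_Ico hβl, image_congr hagree,
      ← (ghMono.monotoneOn.mono hIio).csSup_image_Iio_eq_Ico hβl]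
    simpa [hlβ] using ghCont l hl hlim

theorem union_of_compatible_baumgartner_conditions_general
    (S : Set Ordinal)
    (Dh Dp : Finset Ordinal) (h p : Ordinal → Ordinal)
    (hhPB : InPB S Dh h) (hpPB : InPB S Dp p)
    (hDp : Dp.Nonempty) (β : Ordinal) (hβ : β = Dp.max' hDp)
    (hβh : β ∈ Dh)
    (hext : ∀ γ ∈ Dh, γ ≤ β → γ ∈ Dp ∧ p γ = h γ) :
    InPB S (Dh ∪ Dp) (fun γ => if γ ∈ Dp then p γ else h γ) := by
  obtain ⟨hDhS, αh, hαh, gh, hgh, ghAgree⟩ := hhPB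
  obtain ⟨hDpS, αp, hαp, gp, hgp, gpAgree⟩ := hpPB
  obtain ⟨hβp, hpβ⟩ := hext β hβh le_rfl
  have hle : ∀ γ ∈ Dp, γ ≤ β := fun γ hγ => hβ ▸ Dp.le_max' γ hγ
  have hAbove : ∀ γ ∈ Dh, γ ∉ Dp → β < γ := fun γ hγ hγp =>
    not_le.1 fun hγβ => hγp (hext γ hγ hγβ).1
  refine ⟨fun γ hγ => ?_, αh, fun γ hγ => ?_, _,
    hgp.ite_le hgh (hαp β hβp) (hαh β hβh) (by rw [gpAgree β hβp, ghAgree β hβh, hpβ]),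
    fun γ hγ => ?_⟩
  · by_cases hγp : γ ∈ Dp
    · simpa [hγp] using hDpS γ hγp
    · simpa [hγp] using hDhS γ ((Finset.mem_union.1 hγ).resolve_right hγp)
  · rcases Finset.mem_union.1 hγ with hγ | hγ
    exacts [hαh γ hγ, lt_of_le_of_lt (hle γ hγ) (hαh β hβh)]
  · by_cases hγp : γ ∈ Dp
    · simpa [hγp, hle γ hγp] using gpAgree γ hγp
    · have hγh := (Finset.mem_union.1 hγ).resolve_right hγp
      simpa [hγp, not_le.2 (hAbove γ hγh hγp)] using ghAgree γ hγh

/-- Let `S ⊆ ω₁`, let `h` and `p` (with domains `Dh`, `Dp`) be Baumgartner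
conditions, let `β = max (dom p)`, suppose `β ∈ dom h`, and suppose `p` extends the
restriction of `h` to `β + 1` (every `γ ∈ dom h` with `γ ≤ β` lies in `dom p` and
`p γ = h γ`). Then the union `h ∪ p` (domain `Dh ∪ Dp`, taking the value of `p` on `Dp`
and of `h` elsewhere) is again an element of `P_S^B`. -/
theorem union_of_compatible_baumgartner_conditions
    (S : Set Ordinal) (hS : ∀ x ∈ S, x < omegaOne)
    (Dh Dp : Finset Ordinal) (h p : Ordinal → Ordinal)
    (hhPB : InPB S Dh h) (hpPB : InPB S Dp p)
    (hDp : Dp.Nonempty) (β : Ordinal) (hβ : β = Dp.max' hDp)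
    (hβh : β ∈ Dh)
    (hext : ∀ γ ∈ Dh, γ ≤ β → γ ∈ Dp ∧ p γ = h γ) :
    InPB S (Dh ∪ Dp) (fun γ => if γ ∈ Dp then p γ else h γ) :=
  union_of_compatible_baumgartner_conditions_general S Dh Dp h p hhPB hpPB hDp β hβ hβh hext
end

section
/- Let S ⊆ ω₁, let η ∈ S be an additively indecomposable ordinal (i.e., α + β < η for all ordinals α, β < η), and suppose the single-point function f = {(η, η)} belongs to P_S^B, i.e. there is a strictly increasing continuous E : η+1 → S with E(η) = η. Then (P_S^B)_f = { g ∪ {(η,η)} : g ∈ P_S^B and dom(g) ∪ ran(g) ⊆ η }, where (P_S^B)_f = {h ∈ P_S^B : h ⊇ f and max(dom h) = η}. In particular, for every g ∈ P_S^B with dom(g) ∪ ran(g) ⊆ η there exists a strictly increasing continuous H : η+1 → S ∩ (η+1) with H(η) = η and H(β) = g(β) for all β ∈ dom g. -/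
/-!
Let `μ = max (dom g)` and let `G` witness `g` up to `μ`. Since `E` is continuous at the limit `η`
and `E η = η > G μ`, some `ν < η` has `G μ < E ν`. Follow `G` up to `μ` and continue with the
shifted copy `ξ ↦ E (ν + ξ)`. Indecomposability gives `(μ + 1) + η = η` and `ν + η = η`, so the
glued function is again defined on `η + 1` and sends `η` to `E η = η`. An indecomposable `η > 1`
is a limit; for `η ≤ 1` the function `E` itself already extends `g`.
-/

open Order Ordinal

theorem Ordinal.exists_eq_add_one_add_of_lt {μ β : Ordinal} (h : μ < β) :
    ∃ ξ, β = μ + 1 + ξ :=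
  exists_add_of_le (add_one_le_of_lt h)

namespace IsBaumWitness

variable {S : Set Ordinal} {α : Ordinal} {g : Ordinal → Ordinal}

theorem mono {α' : Ordinal} (hg : IsBaumWitness S α g) (h : α' ≤ α) :
    IsBaumWitness S α' g :=
  ⟨fun β hβ => hg.1 β (hβ.trans_le h), hg.2.1.mono (Set.Iio_subset_Iio h),
    fun l hl hlim => hg.2.2 l (hl.trans_le h) hlim⟩

theorem comp_add {ν γ : Ordinal} (hg : IsBaumWitness S (ν + γ) g) :
    IsBaumWitness S γ (fun ξ => g (ν + ξ)) := by
  obtain ⟨hgS, hmono, hcont⟩ := hg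
  refine ⟨fun ξ hξ => hgS _ (add_lt_add_right hξ ν),
    fun a ha b hb hab => hmono (add_lt_add_right ha ν) (add_lt_add_right hb ν)
      (add_lt_add_right hab ν), fun l hl hlim => ?_⟩
  have hνl : ν + l < ν + γ := add_lt_add_right hl ν
  change g (ν + l) = _
  rw [hcont _ hνl (isSuccLimit_add ν hlim)]
  refine csSup_eq_csSup_of_forall_exists_le ?_ ?_
  · rintro _ ⟨x, hx, rfl⟩
    have hxν : x - ν < l := sub_lt_of_lt_add hx hlim.bot_lt
    exact ⟨_, ⟨x - ν, hxν, rfl⟩, hmono.monotoneOn (hx.trans hνl)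
      (add_lt_add_right (hxν.trans hl) ν) (le_add_sub x ν)⟩
  · rintro _ ⟨ξ, hξ, rfl⟩
    exact ⟨_, ⟨ν + ξ, add_lt_add_right hξ ν, rfl⟩, le_rfl⟩

end IsBaumWitness

noncomputable def glueAt (μ : Ordinal) (G F : Ordinal → Ordinal) (β : Ordinal) : Ordinal :=
  if β ≤ μ then G β else F (β - (μ + 1))

section glueAt

variable {S : Set Ordinal} {μ γ : Ordinal} {G F : Ordinal → Ordinal}

theorem glueAt_of_le {β : Ordinal} (h : β ≤ μ) : glueAt μ G F β = G β := if_pos h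

theorem glueAt_add (ξ : Ordinal) : glueAt μ G F (μ + 1 + ξ) = F ξ := by
  have h : ¬ μ + 1 + ξ ≤ μ := not_le.2 ((lt_add_one μ).trans_le le_self_add)
  simp only [glueAt, if_neg h, Ordinal.add_sub_cancel]

theorem IsBaumWitness.glueAt (hG : IsBaumWitness S (μ + 1) G) (hF : IsBaumWitness S γ F)
    (hGF : G μ < F 0) : IsBaumWitness S (μ + 1 + γ) (glueAt μ G F) := by
  have hGμ : ∀ β ≤ μ, G β ≤ G μ := fun β hβ =>
    hG.2.1.monotoneOn (lt_add_one_iff.2 hβ) (lt_add_one μ) hβ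
  have hF0 : ∀ ξ < γ, F 0 ≤ F ξ := fun ξ hξ =>
    hF.2.1.monotoneOn ((zero_le : 0 ≤ ξ).trans_lt hξ) hξ zero_le
  refine ⟨fun β hβ => ?_, fun a ha b hb hab => ?_, fun l hl hlim => ?_⟩
  · rcases le_or_gt β μ with h | h
    · rw [glueAt_of_le h]
      exact hG.1 β (lt_add_one_iff.2 h)
    · obtain ⟨ξ, rfl⟩ := exists_eq_add_one_add_of_lt h
      rw [glueAt_add]
      exact hF.1 ξ ((add_lt_add_iff_left _).1 hβ)
  · rcases le_or_gt b μ with hbμ | hbμ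
    · rw [glueAt_of_le hbμ, glueAt_of_le (hab.le.trans hbμ)]
      exact hG.2.1 (lt_add_one_iff.2 (hab.le.trans hbμ)) (lt_add_one_iff.2 hbμ) hab
    obtain ⟨ζ, rfl⟩ := exists_eq_add_one_add_of_lt hbμ
    have hζ : ζ < γ := (add_lt_add_iff_left _).1 hb
    rw [glueAt_add]
    rcases le_or_gt a μ with haμ | haμ
    · rw [glueAt_of_le haμ]
      exact ((hGμ a haμ).trans_lt hGF).trans_le (hF0 ζ hζ)
    · obtain ⟨ξ, rfl⟩ := exists_eq_add_one_add_of_lt haμ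
      rw [glueAt_add]
      exact hF.2.1 (Set.mem_Iio.2 ((add_lt_add_iff_left _).1 ha)) hζ
        ((add_lt_add_iff_left _).1 hab)
  · rcases le_or_gt l μ with hlμ | hlμ
    · rw [glueAt_of_le hlμ, hG.2.2 l (lt_add_one_iff.2 hlμ) hlim]
      exact congrArg sSup (Set.image_congr fun β hβ => (glueAt_of_le (hβ.le.trans hlμ)).symm)
    obtain ⟨ξ, rfl⟩ := exists_eq_add_one_add_of_lt hlμ
    have hξ : IsSuccLimit ξ := by
      refine (isSuccLimit_add_iff.1 hlim).resolve_right fun h => ?_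
      exact not_isSuccLimit_succ μ (succ_eq_add_one μ ▸ h.2)
    rw [glueAt_add, hF.2.2 ξ ((add_lt_add_iff_left _).1 hl) hξ]
    refine csSup_eq_csSup_of_forall_exists_le ?_ ?_
    · rintro _ ⟨ζ, hζ, rfl⟩
      exact ⟨_, ⟨μ + 1 + ζ, Set.mem_Iio.2 (add_lt_add_right hζ _), rfl⟩, (glueAt_add ζ).ge⟩
    · rintro _ ⟨β, hβ, rfl⟩
      rcases le_or_gt β μ with hβμ | hβμ
      · refine ⟨F 0, ⟨0, hξ.bot_lt, rfl⟩, ?_⟩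
        rw [glueAt_of_le hβμ]
        exact ((hGμ β hβμ).trans_lt hGF).le
      · obtain ⟨ζ, rfl⟩ := exists_eq_add_one_add_of_lt hβμ
        exact ⟨F ζ, ⟨ζ, Set.mem_Iio.2 ((add_lt_add_iff_left _).1 hβ), rfl⟩, (glueAt_add ζ).le⟩

end glueAt

section Extension

variable {S : Set Ordinal} {η : Ordinal} {E : Ordinal → Ordinal}

theorem IsBaumWitness.exists_extension_fixing (hη : IsPrincipal (· + ·) η) (h1η : 1 < η)
    (hE : IsBaumWitness S (η + 1) E) (hEη : E η = η) {μ : Ordinal} {G : Ordinal → Ordinal}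
    (hG : IsBaumWitness S (μ + 1) G) (hμ : μ < η) (hGμ : G μ < η) :
    ∃ H, IsBaumWitness S (η + 1) H ∧ H η = η ∧ ∀ β ≤ μ, H β = G β := by
  have hsup : G μ < sSup (E '' Set.Iio η) := by
    rwa [← hE.2.2 η (lt_add_one η) (isSuccLimit_of_isPrincipal_add h1η hη), hEη]
  obtain ⟨_, ⟨ν, hν, rfl⟩, hGν⟩ :=
    exists_lt_of_lt_csSup (Set.Nonempty.image E ⟨0, Set.mem_Iio.2 (zero_lt_one.trans h1η)⟩) hsup
  have hF : IsBaumWitness S (η + 1) (fun ξ => E (ν + ξ)) :=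
    IsBaumWitness.comp_add (by rwa [← add_assoc, hη.add_eq_right hν])
  have hμη : μ + 1 + η = η := hη.add_eq_right (hη hμ h1η)
  have hH := hG.glueAt hF (by rwa [add_zero])
  rw [← add_assoc, hμη] at hH
  refine ⟨_, hH, ?_, fun β hβ => glueAt_of_le hβ⟩
  conv_lhs => rw [← hμη]
  rw [glueAt_add, hη.add_eq_right hν, hEη]

theorem InPB.mono {D D' : Finset Ordinal} {f : Ordinal → Ordinal} (hf : InPB S D f)
    (h : D' ⊆ D) : InPB S D' f := by
  obtain ⟨hD, α, hα, G, hG, hGf⟩ := hf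
  exact ⟨fun β hβ => hD β (h hβ), α, fun β hβ => hα β (h hβ), G, hG, fun β hβ => hGf β (h hβ)⟩

theorem InPB.apply_lt_apply {D : Finset Ordinal} {f : Ordinal → Ordinal} (hf : InPB S D f)
    {a b : Ordinal} (ha : a ∈ D) (hb : b ∈ D) (hab : a < b) : f a < f b := by
  obtain ⟨-, α, hα, G, hG, hGf⟩ := hf
  rw [← hGf a ha, ← hGf b hb]
  exact hG.2.1 (hα a ha) (hα b hb) hab

theorem InPB.of_isBaumWitness {D : Finset Ordinal} {f H : Ordinal → Ordinal} {α : Ordinal}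
    (hH : IsBaumWitness S α H) (hD : ∀ β ∈ D, β < omegaOne ∧ β < α)
    (hHf : ∀ β ∈ D, H β = f β) : InPB S D f :=
  ⟨fun β hβ => ⟨(hD β hβ).1, hHf β hβ ▸ hH.1 β (hD β hβ).2⟩,
    α, fun β hβ => (hD β hβ).2, H, hH, hHf⟩

theorem InPB.exists_extension_fixing (hη : IsPrincipal (· + ·) η)
    (hE : IsBaumWitness S (η + 1) E) (hEη : E η = η) {D : Finset Ordinal}
    {g : Ordinal → Ordinal} (hg : InPB S D g) (hD : ∀ β ∈ D, β < η ∧ g β < η) :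
    ∃ H, IsBaumWitness S (η + 1) H ∧ H η = η ∧ ∀ β ∈ D, H β = g β := by
  rcases le_or_gt η 1 with h1η | h1η
  · have below_zero : ∀ x < η, x = 0 := fun x hx => lt_one_iff.1 (hx.trans_le h1η)
    refine ⟨E, hE, hEη, fun β hβ => ?_⟩
    have hEβ : E β < η := hEη ▸ hE.2.1 ((hD β hβ).1.trans (lt_add_one η)) (lt_add_one η)
      (hD β hβ).1
    rw [below_zero _ hEβ, below_zero _ (hD β hβ).2]
  rcases D.eq_empty_or_nonempty with rfl | hne
  · exact ⟨E, hE, hEη, by simp⟩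
  obtain ⟨-, α, hα, G, hG, hGg⟩ := hg
  have hμD := D.max'_mem hne
  have hG' : IsBaumWitness S (D.max' hne + 1) G := hG.mono (add_one_le_of_lt (hα _ hμD))
  obtain ⟨H, hH, hHη, hHG⟩ :=
    IsBaumWitness.exists_extension_fixing hη h1η hE hEη hG' (hD _ hμD).1 (hGg _ hμD ▸ (hD _ hμD).2)
  exact ⟨H, hH, hHη, fun β hβ => (hHG β (D.le_max' β hβ)).trans (hGg β hβ)⟩

end Extension

theorem baumgartner_restriction_below_indecomposable_general
    (S : Set Ordinal) (hS : ∀ x ∈ S, x < omegaOne)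
    (η : Ordinal)
    (hind : ∀ α < η, ∀ β < η, α + β < η)
    (hf : ∃ E : Ordinal → Ordinal, IsBaumWitness S (η + 1) E ∧ E η = η) :
    (∀ (D : Finset Ordinal) (h : Ordinal → Ordinal),
      (InPB S D h ∧ η ∈ D ∧ h η = η ∧ ∀ β ∈ D, β ≤ η) ↔
        (η ∈ D ∧ h η = η ∧ (∀ β ∈ D.erase η, β < η ∧ h β < η) ∧
          InPB S (D.erase η) h))
    ∧
    (∀ (Dg : Finset Ordinal) (g : Ordinal → Ordinal), InPB S Dg g →
      (∀ β ∈ Dg, β < η ∧ g β < η) →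
      ∃ H : Ordinal → Ordinal, IsBaumWitness S (η + 1) H ∧ (∀ β ≤ η, H β ≤ η) ∧
        H η = η ∧ ∀ β ∈ Dg, H β = g β) := by
  obtain ⟨E, hE, hEη⟩ := hf
  have hη : IsPrincipal (· + ·) η := fun a b ha hb => hind a ha b hb
  have hηω : η < omegaOne := hS η (hEη ▸ hE.1 η (lt_add_one η))
  refine ⟨fun D h => ⟨?_, ?_⟩, fun Dg g hg hDg => ?_⟩
  · rintro ⟨hD, hηD, hhη, hle⟩
    refine ⟨hηD, hhη, fun β hβ => ?_, hD.mono (D.erase_subset η)⟩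
    obtain ⟨hβη, hβD⟩ := Finset.mem_erase.1 hβ
    have hlt : β < η := (hle β hβD).lt_of_ne hβη
    exact ⟨hlt, hhη ▸ hD.apply_lt_apply hβD hηD hlt⟩
  · rintro ⟨hηD, hhη, hbelow, hin⟩
    obtain ⟨H, hH, hHη, hHh⟩ := hin.exists_extension_fixing hη hE hEη hbelow
    have hle : ∀ β ∈ D, β ≤ η := fun β hβ =>
      (eq_or_ne β η).elim le_of_eq fun hne => (hbelow β (Finset.mem_erase.2 ⟨hne, hβ⟩)).1.le
    refine ⟨InPB.of_isBaumWitness hH (fun β hβ => ⟨(hle β hβ).trans_lt hηω,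
      lt_add_one_iff.2 (hle β hβ)⟩) fun β hβ => ?_, hηD, hhη, hle⟩
    rcases eq_or_ne β η with rfl | hne
    · rw [hHη, hhη]
    · exact hHh β (Finset.mem_erase.2 ⟨hne, hβ⟩)
  · obtain ⟨H, hH, hHη, hHg⟩ := hg.exists_extension_fixing hη hE hEη hDg
    exact ⟨H, hH, fun β hβ => hHη ▸ hH.2.1.monotoneOn (lt_add_one_iff.2 hβ) (lt_add_one η) hβ,
      hHη, hHg⟩

/-- Let `S ⊆ ω₁`, let `η ∈ S` be additively indecomposable
(`α + β < η` for all `α, β < η`), and suppose the single-point condition `f = {(η, η)}`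
belongs to `P_S^B`, witnessed by a strictly increasing continuous `E : η+1 → S` with
`E η = η`.  Then:
(first conjunct) `(P_S^B)_f = { g ∪ {(η,η)} : g ∈ P_S^B, dom g ∪ ran g ⊆ η }`, stated as:
a condition `h` with domain `D` satisfies `h ∈ P_S^B`, `h ⊇ f` (i.e. `η ∈ D`, `h η = η`)
and `max (dom h) = η` if and only if `η ∈ D`, `h η = η`, and `h` restricted to
`D.erase η` is an element of `P_S^B` whose domain and range lie below `η`;
(second conjunct, "in particular") for every `g ∈ P_S^B` with `dom g ∪ ran g ⊆ η` there
is a strictly increasing continuous `H : η+1 → S ∩ (η+1)` with `H η = η` extending `g`. -/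
theorem baumgartner_restriction_below_indecomposable
    (S : Set Ordinal) (hS : ∀ x ∈ S, x < omegaOne)
    (η : Ordinal) (hηS : η ∈ S)
    (hind : ∀ α < η, ∀ β < η, α + β < η)
    (hf : ∃ E : Ordinal → Ordinal, IsBaumWitness S (η + 1) E ∧ E η = η) :
    (∀ (D : Finset Ordinal) (h : Ordinal → Ordinal),
      (InPB S D h ∧ η ∈ D ∧ h η = η ∧ ∀ β ∈ D, β ≤ η) ↔
        (η ∈ D ∧ h η = η ∧ (∀ β ∈ D.erase η, β < η ∧ h β < η) ∧
          InPB S (D.erase η) h))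
    ∧
    (∀ (Dg : Finset Ordinal) (g : Ordinal → Ordinal), InPB S Dg g →
      (∀ β ∈ Dg, β < η ∧ g β < η) →
      ∃ H : Ordinal → Ordinal, IsBaumWitness S (η + 1) H ∧ (∀ β ≤ η, H β ≤ η) ∧
        H η = η ∧ ∀ β ∈ Dg, H β = g β) :=
  baumgartner_restriction_below_indecomposable_general S hS η hind hf
end

section
/- Let S ⊆ ω₁, let g ∈ P_S^B be nonempty with ξ = max(dom g), and let H : ξ+1 → S be a strictly increasing continuous function with H(β) = g(β) for all β ∈ dom g. Let e₀ : ℕ → ξ+1 be surjective with every fiber e₀⁻¹({α}) infinite, and let e₁ : ℕ → H(ξ)+1 be surjective. Then there exist π₁ : ℕ → S ∩ (H(ξ)+1) and π₂ : ℕ → ℕ (one can take π₁ = H ∘ e₀) such that: (i) for all i, if e₀(i) ∈ dom g then π₁(i) = g(e₀(i)); (ii) for all i, j: π₁(i) = π₁(j) if and only if e₀(i) = e₀(j); (iii) for all i, j: π₁(i) < π₁(j) if and only if e₀(i) < e₀(j); (iv) for all i, if e₀(i) is a nonzero limit ordinal then sup{e₁(m) : m ≤ i and e₁(m) < π₁(i)}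 < π₁(π₂(i)) < π₁(i) and e₀(π₂(i)) < e₀(i) (where the supremum of the empty set is 0). -/
/-! Take `π₁ = H ∘ e₀`: (i)–(iii) hold because `H` extends `g` and is strictly increasing.
For (iv), the supremum in question is a finite supremum of values below `H (e₀ i)`, hence
below it; continuity of `H` at the limit `e₀ i` gives `β < e₀ i` with `H β` above that
supremum, and `π₂ i` is any index with `e₀ (π₂ i) = β`. -/

theorem Set.Finite.csSup_lt_of_forall_lt {α : Type*} [ConditionallyCompleteLinearOrderBot α]
    {s : Set α} {a : α} (hs : s.Finite) (ha : ⊥ < a) (h : ∀ x ∈ s, x < a) : sSup s < a := by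
  rcases s.eq_empty_or_nonempty with rfl | hne
  · rwa [csSup_empty]
  · exact (hs.csSup_lt_iff hne).2 h

theorem csSup_image_le_lt {α : Type*} [ConditionallyCompleteLinearOrderBot α] (e : ℕ → α)
    (i : ℕ) {a : α} (ha : ⊥ < a) : sSup (e '' {m : ℕ | m ≤ i ∧ e m < a}) < a := by
  refine (((Set.finite_le_nat i).subset fun _ hm => hm.1).image e).csSup_lt_of_forall_lt ha ?_
  rintro _ ⟨m, hm, rfl⟩
  exact hm.2

namespace IsBaumWitness

variable {S : Set Ordinal} {α l : Ordinal} {H : Ordinal → Ordinal}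

theorem pos_of_isSuccLimit (hH : IsBaumWitness S α H) (hl : l < α)
    (hlim : Order.IsSuccLimit l) : 0 < H l :=
  bot_le.trans_lt (hH.2.1 (hlim.bot_lt.trans hl) hl hlim.bot_lt)

theorem exists_lt_of_lt_of_isSuccLimit (hH : IsBaumWitness S α H) (hl : l < α)
    (hlim : Order.IsSuccLimit l) {s : Ordinal} (hs : s < H l) : ∃ β < l, s < H β := by
  rw [hH.2.2 l hl hlim] at hs
  obtain ⟨_, ⟨β, hβ, rfl⟩, hsβ⟩ := exists_lt_of_lt_csSup' hs
  exact ⟨β, hβ, hsβ⟩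

end IsBaumWitness

theorem witness_yields_branch_general (S : Set Ordinal)
    (D : Finset Ordinal) (g : Ordinal → Ordinal)
    (ξ : Ordinal)
    (H : Ordinal → Ordinal) (hH : IsBaumWitness S (ξ + 1) H)
    (hHg : ∀ β ∈ D, H β = g β)
    (e₀ : ℕ → Ordinal) (he₀r : ∀ i, e₀ i ≤ ξ)
    (he₀s : ∀ α ≤ ξ, ∃ i, e₀ i = α)
    (e₁ : ℕ → Ordinal) :
    ∃ (π₁ : ℕ → Ordinal) (π₂ : ℕ → ℕ),
      (∀ i, π₁ i ∈ S ∧ π₁ i ≤ H ξ) ∧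
      (∀ i, e₀ i ∈ D → π₁ i = g (e₀ i)) ∧
      (∀ i j, π₁ i = π₁ j ↔ e₀ i = e₀ j) ∧
      (∀ i j, π₁ i < π₁ j ↔ e₀ i < e₀ j) ∧
      (∀ i, e₀ i ≠ 0 → Order.IsSuccLimit (e₀ i) →
        sSup (e₁ '' {m : ℕ | m ≤ i ∧ e₁ m < π₁ i}) < π₁ (π₂ i) ∧
          π₁ (π₂ i) < π₁ i ∧ e₀ (π₂ i) < e₀ i) := by
  have hlt : ∀ i, e₀ i < ξ + 1 := fun i => Order.lt_add_one_iff.2 (he₀r i)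
  have hmono : StrictMonoOn H (Set.Iio (ξ + 1)) := hH.2.1
  have below_limit : ∀ i, Order.IsSuccLimit (e₀ i) → ∃ j,
      sSup (e₁ '' {m : ℕ | m ≤ i ∧ e₁ m < H (e₀ i)}) < H (e₀ j) ∧
        H (e₀ j) < H (e₀ i) ∧ e₀ j < e₀ i := by
    intro i hlim
    obtain ⟨β, hβ, hsβ⟩ := hH.exists_lt_of_lt_of_isSuccLimit (hlt i) hlim
      (csSup_image_le_lt e₁ i (hH.pos_of_isSuccLimit (hlt i) hlim))
    obtain ⟨j, rfl⟩ := he₀s β (hβ.le.trans (he₀r i))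
    exact ⟨j, hsβ, hmono (hβ.trans (hlt i)) (hlt i) hβ, hβ⟩
  choose! π₂ hπ₂ using below_limit
  exact ⟨H ∘ e₀, π₂,
    fun i => ⟨hH.1 _ (hlt i), hmono.monotoneOn (hlt i) (lt_add_one ξ) (he₀r i)⟩,
    fun i hi => hHg _ hi,
    fun i j => hmono.injOn.eq_iff (hlt i) (hlt j),
    fun i j => hmono.lt_iff_lt (hlt i) (hlt j),
    fun i _ hlim => hπ₂ i hlim⟩

/-- Every witness `H : ξ+1 → S` (strictly increasing, continuous, extending
`g`) for a nonempty condition `g ∈ P_S^B` with `ξ = max (dom g)` gives rise to an infinite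
branch through the definability tree `T`: given a surjection `e₀ : ℕ → ξ+1` all of whose
fibers are infinite and a surjection `e₁ : ℕ → H(ξ)+1`, there exist
`π₁ : ℕ → S ∩ (H(ξ)+1)` (one can take `π₁ = H ∘ e₀`) and `π₂ : ℕ → ℕ` satisfying
conditions (i)-(iv), where `sup ∅ = 0`. -/
theorem witness_yields_branch (S : Set Ordinal) (hS : ∀ x ∈ S, x < omegaOne)
    (D : Finset Ordinal) (hD : D.Nonempty) (g : Ordinal → Ordinal)
    (hg : InPB S D g)
    (ξ : Ordinal) (hξ : ξ = D.max' hD)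
    (H : Ordinal → Ordinal) (hH : IsBaumWitness S (ξ + 1) H)
    (hHg : ∀ β ∈ D, H β = g β)
    (e₀ : ℕ → Ordinal) (he₀r : ∀ i, e₀ i ≤ ξ)
    (he₀s : ∀ α ≤ ξ, ∃ i, e₀ i = α)
    (he₀f : ∀ α ≤ ξ, {i : ℕ | e₀ i = α}.Infinite)
    (e₁ : ℕ → Ordinal) (he₁r : ∀ i, e₁ i ≤ H ξ) (he₁s : ∀ α ≤ H ξ, ∃ i, e₁ i = α) :
    ∃ (π₁ : ℕ → Ordinal) (π₂ : ℕ → ℕ),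
      (∀ i, π₁ i ∈ S ∧ π₁ i ≤ H ξ) ∧
      (∀ i, e₀ i ∈ D → π₁ i = g (e₀ i)) ∧
      (∀ i j, π₁ i = π₁ j ↔ e₀ i = e₀ j) ∧
      (∀ i j, π₁ i < π₁ j ↔ e₀ i < e₀ j) ∧
      (∀ i, e₀ i ≠ 0 → Order.IsSuccLimit (e₀ i) →
        sSup (e₁ '' {m : ℕ | m ≤ i ∧ e₁ m < π₁ i}) < π₁ (π₂ i) ∧
          π₁ (π₂ i) < π₁ i ∧ e₀ (π₂ i) < e₀ i) :=
  witness_yields_branch_general S D g ξ H hH hHg e₀ he₀r he₀s e₁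
end

section
/- Fix a bijection π : ℕ → ℕ × ℕ and an injective function s : ℕ → Finset ℕ (an injective enumeration of the finite subsets of ℕ need not be surjective; injectivity suffices). For y ⊆ ℕ define δ(y) = {i ∈ ℕ : there exists m ∈ ℕ with s(i) = y ∩ {0, 1, …, m−1}}. Let β and β′ be nonzero countable ordinals with β ≠ β′, let f : ℕ → β and f′ : ℕ → β′ be surjections, and set y = {k ∈ ℕ : f(i) < f(j) where (i, j) = π(k)} and y′ = {k ∈ ℕ : f′(i) < f′(j) where (i, j) = π(k)}. Then δ(y) ∩ δ(y′) is finite. In particular, the sets δ_β obtained in this way from surjections onto pairwise distinct countable ordinals form an almost disjoint family of subsets of ℕ. -/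
/-- Given an injective enumeration `s : ℕ → Finset ℕ` of finite sets and `y ⊆ ℕ`,
`δ(y) = {i : ∃ m, s i = y ∩ {0,…,m−1}}` (as sets, `{0,…,m−1} = Set.Iio m`). -/
def adReal (s : ℕ → Finset ℕ) (y : Set ℕ) : Set ℕ :=
  {i | ∃ m : ℕ, (↑(s i) : Set ℕ) = y ∩ Set.Iio m}

/-- Given a pairing bijection `π : ℕ → ℕ × ℕ` and `f : ℕ → Ordinal`, the real
`y = {k : f i < f j where (i,j) = π k}` coding the order induced by `f`. -/
def ordRelReal (π : ℕ → ℕ × ℕ) (f : ℕ → Ordinal) : Set ℕ :=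
  {k | f (π k).1 < f (π k).2}

/-!
Two reals that differ at `n` have no common initial segment of length `> n`, so every finite set
enumerated into both `δ(y)` and `δ(y')` lies below `n`; as `s` is injective there are finitely many
such indices. And `ordRelReal π f` remembers the order induced by `f` on `ℕ`; since the range of
a surjection onto an ordinal `β` is the initial segment `Iio β`, a well-founded induction recovers
`f`, hence `β`, from that order.
-/

open Set

section AdReal

variable {s : ℕ → Finset ℕ} {y y' : Set ℕ}

lemma coe_subset_Iio_of_mem_adReal_inter {n : ℕ} (hn : ¬(n ∈ y ↔ n ∈ y')) {i : ℕ}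
    (hi : i ∈ adReal s y ∩ adReal s y') : (↑(s i) : Set ℕ) ⊆ Iio n := by
  obtain ⟨⟨m, hm⟩, ⟨m', hm'⟩⟩ := hi
  intro k hk
  have hkm : k ∈ y ∩ Iio m := hm ▸ hk
  have hkm' : k ∈ y' ∩ Iio m' := hm' ▸ hk
  by_contra hnk
  have hnm : n < m := lt_of_le_of_lt (not_lt.mp hnk) hkm.2
  have hnm' : n < m' := lt_of_le_of_lt (not_lt.mp hnk) hkm'.2
  have hy : n ∈ y ↔ n ∈ (↑(s i) : Set ℕ) := by simp [hm, hnm]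
  have hy' : n ∈ y' ↔ n ∈ (↑(s i) : Set ℕ) := by simp [hm', hnm']
  exact hn (hy.trans hy'.symm)

lemma adReal_inter_finite_of_ne (hs : Function.Injective s) (h : y ≠ y') :
    (adReal s y ∩ adReal s y').Finite := by
  obtain ⟨n, hn⟩ : ∃ n, ¬(n ∈ y ↔ n ∈ y') := by simpa [Set.ext_iff] using h
  have hsub : adReal s y ∩ adReal s y' ⊆ s ⁻¹' ↑(Finset.range n).powerset := fun i hi => by
    simpa [← Finset.coe_subset] using coe_subset_Iio_of_mem_adReal_inter hn hi
  exact (Set.Finite.preimage hs.injOn (Finset.finite_toSet _)).subset hsub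

end AdReal

lemma eq_of_lt_iff_lt {ι α : Type*} [LinearOrder α] [WellFoundedLT α] {f g : ι → α}
    (hf : IsLowerSet (range f)) (hg : IsLowerSet (range g))
    (h : ∀ i j, f i < f j ↔ g i < g j) : f = g := by
  suffices ∀ a i, f i = a → g i = a from funext fun i => (this (f i) i rfl).symm
  intro a
  induction a using WellFoundedLT.induction with
  | _ a ih =>
  rintro i rfl
  rcases lt_trichotomy (g i) (f i) with hlt | heq | hlt
  · obtain ⟨j, hj⟩ := hf hlt.le (mem_range_self i)
    have hji : f j < f i := hj ▸ hlt
    have := (h j i).mp hji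
    rw [ih _ hji j rfl, hj] at this
    exact absurd this (lt_irrefl _)
  · exact heq
  · obtain ⟨j, hj⟩ := hg hlt.le (mem_range_self i)
    have hji : f j < f i := (h j i).mpr (hj ▸ hlt)
    rw [← ih _ hji j rfl, hj] at hji
    exact absurd hji (lt_irrefl _)

lemma range_eq_Iio {ι α : Type*} [Preorder α] {f : ι → α} {β : α} (hf : ∀ i, f i < β)
    (hfs : ∀ γ < β, ∃ i, f i = γ) : range f = Iio β :=
  Subset.antisymm (range_subset_iff.mpr hf) fun γ hγ => hfs γ hγ

lemma lt_iff_lt_of_ordRelReal_eq {π : ℕ → ℕ × ℕ} (hπ : Function.Surjective π)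
    {f f' : ℕ → Ordinal} (h : ordRelReal π f = ordRelReal π f') (i j : ℕ) :
    f i < f j ↔ f' i < f' j := by
  obtain ⟨k, hk⟩ := hπ (i, j)
  simpa [ordRelReal, hk] using Set.ext_iff.mp h k

lemma eq_of_ordRelReal_eq {π : ℕ → ℕ × ℕ} (hπ : Function.Surjective π) {f f' : ℕ → Ordinal}
    {β β' : Ordinal} (hf : range f = Iio β) (hf' : range f' = Iio β')
    (h : ordRelReal π f = ordRelReal π f') : β = β' := by
  have hff' : f = f' := eq_of_lt_iff_lt (hf ▸ isLowerSet_Iio β) (hf' ▸ isLowerSet_Iio β')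
    (lt_iff_lt_of_ordRelReal_eq hπ h)
  exact Iio_injective (hf.symm.trans (hff' ▸ hf'))

lemma adReal_ordRelReal_inter_finite {π : ℕ → ℕ × ℕ} (hπ : Function.Surjective π)
    {s : ℕ → Finset ℕ} (hs : Function.Injective s) {f f' : ℕ → Ordinal} {β β' : Ordinal}
    (hf : range f = Iio β) (hf' : range f' = Iio β') (hne : β ≠ β') :
    (adReal s (ordRelReal π f) ∩ adReal s (ordRelReal π f')).Finite :=
  adReal_inter_finite_of_ne hs fun h => hne (eq_of_ordRelReal_eq hπ hf hf' h)

/-- Fix a bijection `π : ℕ → ℕ × ℕ` and an injective `s : ℕ → Finset ℕ`.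
Let `β ≠ β'` be nonzero countable ordinals, `f : ℕ → β` and `f' : ℕ → β'` surjections,
and let `y, y'` be the reals coding the induced orders.  Then `δ(y) ∩ δ(y')` is finite.
In particular (second conjunct), for any family of surjections `F a : ℕ → B a` onto
pairwise distinct nonzero countable ordinals `B a`, the sets `δ(ordRelReal π (F a))` form
an almost disjoint family of subsets of ℕ. -/
theorem adReal_almost_disjoint (π : ℕ → ℕ × ℕ) (hπ : Function.Bijective π)
    (s : ℕ → Finset ℕ) (hs : Function.Injective s) :
    (∀ β β' : Ordinal, β ≠ 0 → β' ≠ 0 → β < omegaOne → β' < omegaOne → β ≠ β' →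
      ∀ f f' : ℕ → Ordinal,
        (∀ i, f i < β) → (∀ γ < β, ∃ i, f i = γ) →
        (∀ i, f' i < β') → (∀ γ < β', ∃ i, f' i = γ) →
        (adReal s (ordRelReal π f) ∩ adReal s (ordRelReal π f')).Finite)
    ∧
    (∀ {ι : Type} (B : ι → Ordinal) (F : ι → ℕ → Ordinal),
      (∀ a, B a ≠ 0) → (∀ a, B a < omegaOne) → Function.Injective B →
      (∀ a i, F a i < B a) → (∀ a, ∀ γ < B a, ∃ i, F a i = γ) →
      ∀ a b, a ≠ b →
        (adReal s (ordRelReal π (F a)) ∩ adReal s (ordRelReal π (F b))).Finite) := by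
  refine ⟨fun β β' _ _ _ _ hne f f' hf hfs hf' hfs' =>
    adReal_ordRelReal_inter_finite hπ.2 hs (range_eq_Iio hf hfs) (range_eq_Iio hf' hfs') hne, ?_⟩
  intro ι B F _ _ hB hF hFs a b hab
  exact adReal_ordRelReal_inter_finite hπ.2 hs (range_eq_Iio (f := F a) (hF a) (hFs a))
    (range_eq_Iio (f := F b) (hF b) (hFs b)) (hB.ne hab)
end
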